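/- arXiv:1304.0089 — 4 statements merged into one kernel-verified Lean document; each statement's English description precedes it below -/
import Mathlib

section
/- Every block of the incidence structure (W, B, ∈) has exactly 6 elements. -/
/-- The field `GF(3)`. -/
abbrev F : Type := ZMod 3

/-- The vector space `F³`. -/
abbrev V : Type := Fin 3 → F

/-- The value of a quadratic form `q` at a point of `PG(2,3)`; this is well defined
(independent of the representative) since `q (c • v) = c² • q v = q v` for `c ≠ 0` in `GF(3)`. -/
noncomputable def pval (q : QuadraticForm F V) (X : Projectivization F V) : F := q X.rep

/-- `b` is a block of the incidence structure `(W, B, ∈)` with distinguished point `U`: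
`b` has more than three elements and there is a nonzero quadratic form `q` such that `b`
consists exactly of the points `X ≠ U` with `q(X) = 2 · q(U)`. -/
noncomputable def IsBlock (U : Projectivization F V) (b : Set (Projectivization F V)) : Prop :=
  3 < b.ncard ∧ ∃ q : QuadraticForm F V, q ≠ 0 ∧
    b = {X : Projectivization F V | X ≠ U ∧ pval q X = 2 * pval q U}

lemma units_sq (c : Fˣ) : (c : F) * c = 1 := by revert c; decide

instance instDR : DecidableRel (fun a b : {v : V // v ≠ 0} =>
    (projectivizationSetoid F V).r a b) := fun a b =>
  decidable_of_iff (∃ c : F, c • (b : V) = a) <| by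
    rw [← Projectivization.mk_eq_mk_iff' F a.1 b.1 a.2 b.2]
    exact Quotient.eq''

instance : DecidableEq (Projectivization F V) :=
  @Quotient.decidableEq _ _ instDR

instance : Fintype (Projectivization F V) := @Quotient.fintype _ _ _ instDR

/-- explicit polynomial evaluation -/
def ev (a0 a1 a2 a3 a4 a5 : F) (v : V) : F :=
  a0 * v 0 * v 0 + a1 * v 1 * v 1 + a2 * v 2 * v 2 +
    a3 * (v 0 * v 1) + a4 * (v 0 * v 2) + a5 * (v 1 * v 2)

lemma ev_smul (a0 a1 a2 a3 a4 a5 : F) (t : F) (v : V) :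
    ev a0 a1 a2 a3 a4 a5 (t • v) = t * t * ev a0 a1 a2 a3 a4 a5 v := by
  simp only [ev, Pi.smul_apply, smul_eq_mul]; ring

def evP (a0 a1 a2 a3 a4 a5 : F) : Projectivization F V → F :=
  Quotient.lift (fun v : {w : V // w ≠ 0} => ev a0 a1 a2 a3 a4 a5 v.1) <| by
    intro a b h
    obtain ⟨c, hc⟩ := (Projectivization.mk_eq_mk_iff F a.1 b.1 a.2 b.2).mp (Quotient.sound' h)
    rw [Units.smul_def] at hc
    simp only [← hc, ev_smul, units_sq, one_mul]

lemma evP_mk (a0 a1 a2 a3 a4 a5 : F) (v : V) (hv : v ≠ 0) :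
    evP a0 a1 a2 a3 a4 a5 (Projectivization.mk F v hv) = ev a0 a1 a2 a3 a4 a5 v := rfl

noncomputable abbrev bvec (i : Fin 3) : V := Pi.single i 1

lemma q_eq_ev (q : QuadraticForm F V) (v : V) :
    q v = ev (q (bvec 0)) (q (bvec 1)) (q (bvec 2))
      (QuadraticMap.polar ⇑q (bvec 0) (bvec 1))
      (QuadraticMap.polar ⇑q (bvec 0) (bvec 2))
      (QuadraticMap.polar ⇑q (bvec 1) (bvec 2)) v := by
  have hma : ∀ x y : V, q (x + y) = q x + q y + QuadraticMap.polar ⇑q x y := by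
    intro x y
    simp only [QuadraticMap.polar]
    ring
  have hv : v = v 0 • bvec 0 + v 1 • bvec 1 + v 2 • bvec 2 := by
    funext i; fin_cases i <;> simp [bvec, Pi.single]
  conv_lhs => rw [hv]
  rw [hma, hma]
  simp only [QuadraticMap.map_smul, QuadraticMap.polar_smul_left,
    QuadraticMap.polar_smul_right, QuadraticMap.polar_add_left, smul_eq_mul, ev]
  ring

lemma pval_mk (q : QuadraticForm F V) (v : V) (hv : v ≠ 0) :
    pval q (Projectivization.mk F v hv) = q v := by
  obtain ⟨c, hc⟩ := Projectivization.exists_smul_eq_mk_rep F v hv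
  rw [pval, ← hc, Units.smul_def, QuadraticMap.map_smul, smul_eq_mul, units_sq, one_mul]

lemma pval_eq_evP (q : QuadraticForm F V) (X : Projectivization F V) :
    pval q X = evP (q (bvec 0)) (q (bvec 1)) (q (bvec 2))
      (QuadraticMap.polar ⇑q (bvec 0) (bvec 1))
      (QuadraticMap.polar ⇑q (bvec 0) (bvec 2))
      (QuadraticMap.polar ⇑q (bvec 1) (bvec 2)) X := by
  induction X using Projectivization.ind with
  | h v hv => rw [pval_mk, evP_mk, q_eq_ev]

set_option maxHeartbeats 4000000 in
lemma key (a0 a1 a2 a3 a4 a5 : F) (U : Projectivization F V)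
    (hnz : ¬(a0 = 0 ∧ a1 = 0 ∧ a2 = 0 ∧ a3 = 0 ∧ a4 = 0 ∧ a5 = 0))
    (h : 3 < (Finset.univ.filter fun X : Projectivization F V =>
      X ≠ U ∧ evP a0 a1 a2 a3 a4 a5 X = 2 * evP a0 a1 a2 a3 a4 a5 U).card) :
    (Finset.univ.filter fun X : Projectivization F V =>
      X ≠ U ∧ evP a0 a1 a2 a3 a4 a5 X = 2 * evP a0 a1 a2 a3 a4 a5 U).card = 6 := by
  revert a0 a1 a2 a3 a4 a5 U
  decide

/-- Every block of the incidence structure `(W, B, ∈)` has exactly `6` elements. -/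
theorem block_card_eq_six (U : Projectivization F V) (b : Set (Projectivization F V))
    (hb : IsBlock U b) : b.ncard = 6 := by
  obtain ⟨h3, q, hq, hbq⟩ := hb
  have hnz : ¬(q (bvec 0) = 0 ∧ q (bvec 1) = 0 ∧ q (bvec 2) = 0 ∧
      QuadraticMap.polar ⇑q (bvec 0) (bvec 1) = 0 ∧
      QuadraticMap.polar ⇑q (bvec 0) (bvec 2) = 0 ∧
      QuadraticMap.polar ⇑q (bvec 1) (bvec 2) = 0) := by
    rintro ⟨h0, h1, h2, h4, h5, h6⟩
    apply hq
    ext v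
    rw [q_eq_ev q v, h0, h1, h2, h4, h5, h6]
    simp [ev]
  have hset : b = ↑(Finset.univ.filter fun X : Projectivization F V =>
      X ≠ U ∧ evP (q (bvec 0)) (q (bvec 1)) (q (bvec 2))
        (QuadraticMap.polar ⇑q (bvec 0) (bvec 1))
        (QuadraticMap.polar ⇑q (bvec 0) (bvec 2))
        (QuadraticMap.polar ⇑q (bvec 1) (bvec 2)) X
      = 2 * evP (q (bvec 0)) (q (bvec 1)) (q (bvec 2))
        (QuadraticMap.polar ⇑q (bvec 0) (bvec 1))
        (QuadraticMap.polar ⇑q (bvec 0) (bvec 2))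
        (QuadraticMap.polar ⇑q (bvec 1) (bvec 2)) U) := by
    rw [hbq]
    ext X
    simp [pval_eq_evP q]
  rw [hset, Set.ncard_coe_finset] at h3 ⊢
  exact key _ _ _ _ _ _ U hnz h3
end

section
/- For every 5-element subset D of W there exists at least one block containing D. -/
/-- Evaluation of the quadratic form with coefficient vector `a` at `v`, as a linear map
in the coefficients. -/
def evalLM (v : V) : (Fin 6 → F) →ₗ[F] F where
  toFun a := a 0 * (v 0 * v 0) + a 1 * (v 1 * v 1) + a 2 * (v 2 * v 2)
    + a 3 * (v 0 * v 1) + a 4 * (v 0 * v 2) + a 5 * (v 1 * v 2)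
  map_add' x y := by simp [Pi.add_apply]; ring
  map_smul' c x := by simp [Pi.smul_apply, smul_eq_mul]; ring

/-- The quadratic form with coefficient vector `a`. -/
noncomputable def qOf (a : Fin 6 → F) : QuadraticForm F V :=
  (Matrix.of ![![a 0, a 3, a 4], ![0, a 1, a 5], ![0, 0, a 2]]).toQuadraticForm'

theorem qOf_apply (a : Fin 6 → F) (v : V) : qOf a v = evalLM v a := by
  simp only [qOf, Matrix.toQuadraticForm', LinearMap.BilinMap.toQuadraticMap_apply,
    Matrix.toLinearMap₂'_apply, evalLM, LinearMap.coe_mk, AddHom.coe_mk]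
  simp [Fin.sum_univ_three, Matrix.of_apply, Matrix.vecHead, Matrix.vecTail]
  ring

instance : Finite (Projectivization F V) := Quotient.finite _

/-- For every `5`-element subset `D` of `W = PG(2,3) \ {U}` there exists at least one block
containing `D`. -/
theorem exists_block_of_five_set (U : Projectivization F V)
    (D : Set (Projectivization F V)) (hDW : D ⊆ ({U}ᶜ : Set (Projectivization F V)))
    (hD : D.ncard = 5) : ∃ b : Set (Projectivization F V), IsBlock U b ∧ D ⊆ b := by
  have hDfin : D.Finite := Set.toFinite D
  classical
  -- the finset of points of D
  set s : Finset (Projectivization F V) := hDfin.toFinset with hs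
  have hsD : (s : Set (Projectivization F V)) = D := hDfin.coe_toFinset
  have hscard : Fintype.card ↥s = 5 := by
    rw [Fintype.card_coe]
    have : s.card = D.ncard := by rw [← hsD, Set.ncard_coe_finset]
    omega
  -- the linear map encoding the 5 conditions
  let L : (Fin 6 → F) →ₗ[F] (↥s → F) :=
    LinearMap.pi fun X => evalLM (X : Projectivization F V).rep - (2 : F) • evalLM U.rep
  have hnotinj : ¬ Function.Injective L := by
    intro hinj
    have := LinearMap.finrank_le_finrank_of_injective hinj
    rw [Module.finrank_pi, Module.finrank_pi, hscard, Fintype.card_fin] at this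
    omega
  -- get a nonzero coefficient vector in the kernel
  have : ∃ a : Fin 6 → F, a ≠ 0 ∧ L a = 0 := by
    by_contra h
    push_neg at h
    apply hnotinj
    have hker : LinearMap.ker L = ⊥ := by
      rw [LinearMap.ker_eq_bot']
      intro a ha
      by_contra ha0
      exact absurd ha (h a ha0)
    exact LinearMap.ker_eq_bot.mp hker
  obtain ⟨a, ha0, haL⟩ := this
  have hcond : ∀ X : Projectivization F V, X ∈ s →
      evalLM X.rep a = 2 * evalLM U.rep a := by
    intro X hX
    have := congrFun haL ⟨X, hX⟩
    simp only [L, LinearMap.pi_apply, LinearMap.sub_apply, LinearMap.smul_apply,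
      Pi.zero_apply, smul_eq_mul] at this
    linear_combination this
  set q : QuadraticForm F V := qOf a with hq
  have hqne : q ≠ 0 := by
    intro h0
    apply ha0
    have hval : ∀ v : V, evalLM v a = 0 := by
      intro v
      rw [← qOf_apply, ← hq, h0]
      rfl
    funext i
    fin_cases i
    · have := hval ![1, 0, 0]; simpa [evalLM] using this
    · have := hval ![0, 1, 0]; simpa [evalLM] using this
    · have := hval ![0, 0, 1]; simpa [evalLM] using this
    · have h01 := hval ![1, 1, 0]
      have h0' := hval ![1, 0, 0]
      have h1' := hval ![0, 1, 0]
      simp [evalLM] at h01 h0' h1' ⊢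
      linear_combination h01 - h0' - h1'
    · have h02 := hval ![1, 0, 1]
      have h0' := hval ![1, 0, 0]
      have h2' := hval ![0, 0, 1]
      simp [evalLM] at h02 h0' h2' ⊢
      linear_combination h02 - h0' - h2'
    · have h12 := hval ![0, 1, 1]
      have h1' := hval ![0, 1, 0]
      have h2' := hval ![0, 0, 1]
      simp [evalLM] at h12 h1' h2' ⊢
      linear_combination h12 - h1' - h2'
  refine ⟨{X : Projectivization F V | X ≠ U ∧ pval q X = 2 * pval q U}, ⟨?_, q, hqne, rfl⟩, ?_⟩
  · -- block has more than 3 elements since it contains D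
    have hsub : D ⊆ {X : Projectivization F V | X ≠ U ∧ pval q X = 2 * pval q U} := by
      intro X hX
      refine ⟨fun h => hDW hX (h ▸ rfl), ?_⟩
      have hXs : X ∈ s := by rw [← hsD] at hX; exact_mod_cast hX
      simp only [pval, hq, qOf_apply]
      exact hcond X hXs
    have := Set.ncard_le_ncard hsub (Set.toFinite _)
    omega
  · intro X hX
    refine ⟨fun h => hDW hX (h ▸ rfl), ?_⟩
    have hXs : X ∈ s := by rw [← hsD] at hX; exact_mod_cast hX
    simp only [pval, hq, qOf_apply]
    exact hcond X hXs
end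

section
/- There is no 5-arc in PG(2,3): among any 5 distinct points of the projective plane over GF(3), there exist three distinct points lying on a common line. -/
/-- A line of `PG(2,3)`: the point set of a two-dimensional subspace of `F³`. -/
def IsLine (ℓ : Set (Projectivization F V)) : Prop :=
  ∃ S : Submodule F V, Module.finrank F S = 2 ∧
    ℓ = {X : Projectivization F V | X.rep ∈ S}

/-! ### Auxiliary finite computations -/

/-- Triples over `GF(3)`, a computation-friendly stand-in for `V`. -/
def T : Type := F × F × F

instance : DecidableEq T := by unfold T; infer_instance

/-- The 13 canonical representatives of the points of `PG(2,3)`. -/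
def pts' : Fin 13 → T :=
  ![(0,0,1),(0,1,0),(0,1,1),(0,1,2),(1,0,0),(1,0,1),(1,0,2),
    (1,1,0),(1,1,1),(1,1,2),(1,2,0),(1,2,1),(1,2,2)]

/-- Linear combination on triples. -/
def comb (s t : F) (x y : T) : T :=
  (s*x.1 + t*y.1, s*x.2.1 + t*y.2.1, s*x.2.2 + t*y.2.2)

/-- Collinearity of three of the canonical points. -/
def Coll3 (x y z : Fin 13) : Prop := ∃ s t : F, pts' z = comb s t (pts' x) (pts' y)

instance (x y z : Fin 13) : Decidable (Coll3 x y z) := by unfold Coll3; infer_instance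

/-- Some three of the five given canonical points are collinear. -/
def HasColl (a b c d e : Fin 13) : Prop :=
  Coll3 a b c ∨ Coll3 a b d ∨ Coll3 a b e ∨ Coll3 a c d ∨ Coll3 a c e ∨
  Coll3 a d e ∨ Coll3 b c d ∨ Coll3 b c e ∨ Coll3 b d e ∨ Coll3 c d e

instance (a b c d e : Fin 13) : Decidable (HasColl a b c d e) := by
  unfold HasColl; infer_instance

def L : List (Fin 13) := List.finRange 13

set_option maxRecDepth 10000 in
lemma lemA'' : ∀ a ∈ L, ∀ b ∈ L.filter (a < ·), ∀ c ∈ L.filter (b < ·),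
    ∀ d ∈ L.filter (c < ·), ∀ e ∈ L.filter (d < ·), HasColl a b c d e := by decide

lemma lemA' {a b c d e : Fin 13} (h1 : a < b) (h2 : b < c) (h3 : c < d) (h4 : d < e) :
    HasColl a b c d e := by
  have hm : ∀ x : Fin 13, x ∈ L := fun x => List.mem_finRange x
  have hf : ∀ x y : Fin 13, x < y → y ∈ L.filter (x < ·) := by
    intro x y hxy
    rw [List.mem_filter]
    exact ⟨hm y, by simpa using hxy⟩
  exact lemA'' a (hm a) b (hf a b h1) c (hf b c h2) d (hf c d h3) e (hf d e h4)

/-- Interpret a triple as an element of `V`. -/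
def toV : T → V := fun w => ![w.1, w.2.1, w.2.2]

lemma toV_comb (s t : F) (x y : T) : toV (comb s t x y) = s • toV x + t • toV y := by
  funext i
  fin_cases i <;> simp [toV, comb]

/-- Every nonzero vector is proportional to one of the canonical representatives. -/
lemma lemB : ∀ v : V, v ≠ 0 → ∃ c : F, c ≠ 0 ∧ ∃ m : Fin 13, c • v = toV (pts' m) := by
  decide

open Projectivization in
/-- The main step: if the canonical indices of three of the points are collinear,
we get the desired line. -/
lemma main_of_coll (p : Fin 5 → Projectivization F V) (hp : Function.Injective p)
    (c : Fin 5 → F) (n : Fin 5 → Fin 13)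
    (hn : ∀ i, c i • (p i).rep = toV (pts' (n i)))
    (i j k : Fin 5) (hij : i ≠ j)
    (hck : c k ≠ 0) (h : Coll3 (n i) (n j) (n k)) :
    ∃ ℓ : Set (Projectivization F V), IsLine ℓ ∧ p i ∈ ℓ ∧ p j ∈ ℓ ∧ p k ∈ ℓ := by
  obtain ⟨s, t, hst⟩ := h
  set a := (p i).rep with ha
  set b := (p j).rep with hb
  -- the submodule spanned by the representatives of `p i` and `p j`
  set S : Submodule F V := Submodule.span F (Set.range ![a, b]) with hS
  have haS : a ∈ S := Submodule.subset_span ⟨0, rfl⟩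
  have hbS : b ∈ S := Submodule.subset_span ⟨1, rfl⟩
  -- linear independence of the two representatives
  have hind : LinearIndependent F ![a, b] := by
    have h1 : Projectivization.Independent ![p i, p j] :=
      (Projectivization.independent_pair_iff_ne (p i) (p j)).mpr (hp.ne hij)
    rw [Projectivization.independent_iff] at h1
    have : Projectivization.rep ∘ ![p i, p j] = ![a, b] := by
      funext x; fin_cases x <;> rfl
    rwa [this] at h1
  have hrank : Module.finrank F S = 2 := by
    rw [hS, finrank_span_eq_card hind]
    simp
  -- membership of the third point
  have hkmem : (p k).rep ∈ S := by
    have hv : c k • (p k).rep = s • (c i • a) + t • (c j • b) := by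
      rw [hn k, hst, toV_comb, hn i, hn j]
    have hmem : c k • (p k).rep ∈ S := by
      rw [hv]
      exact S.add_mem (S.smul_mem s (S.smul_mem (c i) haS))
        (S.smul_mem t (S.smul_mem (c j) hbS))
    have := S.smul_mem (c k)⁻¹ hmem
    rwa [inv_smul_smul₀ hck] at this
  exact ⟨{X | X.rep ∈ S}, ⟨S, hrank, rfl⟩, haS, hbS, hkmem⟩

/-- There is no `5`-arc in `PG(2,3)`: among any `5` distinct points of the projective
plane over `GF(3)` there are three distinct points on a common line. -/
theorem no_five_arc (p : Fin 5 → Projectivization F V) (hp : Function.Injective p) :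
    ∃ i j k : Fin 5, i ≠ j ∧ i ≠ k ∧ j ≠ k ∧
      ∃ ℓ : Set (Projectivization F V), IsLine ℓ ∧ p i ∈ ℓ ∧ p j ∈ ℓ ∧ p k ∈ ℓ := by
  have key : ∀ i : Fin 5, ∃ c : F, c ≠ 0 ∧ ∃ m : Fin 13, c • (p i).rep = toV (pts' m) :=
    fun i => lemB _ (p i).rep_nonzero
  choose c hc n hn using key
  -- `n` is injective
  have hninj : Function.Injective n := by
    intro i j hij
    by_contra hne
    apply hne
    apply hp
    have h1 : c i • (p i).rep = c j • (p j).rep := by rw [hn i, hn j, hij]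
    have h2 : (p i).rep = ((c i)⁻¹ * c j) • (p j).rep := by
      rw [mul_smul, ← h1, inv_smul_smul₀ (hc i)]
    rw [← (p i).mk_rep, ← (p j).mk_rep]
    rw [Projectivization.mk_eq_mk_iff']
    exact ⟨(c i)⁻¹ * c j, h2.symm⟩
  -- sort `n`
  set σ := Tuple.sort n with hσ
  have hmono : StrictMono (n ∘ σ) :=
    (Tuple.monotone_sort n).strictMono_of_injective (hninj.comp σ.injective)
  have hlt : ∀ x y : Fin 5, x < y → (n ∘ σ) x < (n ∘ σ) y := fun x y h => hmono h
  have hcoll : HasColl ((n ∘ σ) 0) ((n ∘ σ) 1) ((n ∘ σ) 2) ((n ∘ σ) 3) ((n ∘ σ) 4) :=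
    lemA' (hlt 0 1 (by decide)) (hlt 1 2 (by decide)) (hlt 2 3 (by decide))
      (hlt 3 4 (by decide))
  have hne : ∀ x y : Fin 5, x ≠ y → σ x ≠ σ y := fun x y h => fun h' => h (σ.injective h')
  rcases hcoll with h | h | h | h | h | h | h | h | h | h
  · exact ⟨σ 0, σ 1, σ 2, hne 0 1 (by decide), hne 0 2 (by decide), hne 1 2 (by decide),
      main_of_coll p hp c n hn _ _ _ (hne 0 1 (by decide)) (hc _) h⟩
  · exact ⟨σ 0, σ 1, σ 3, hne 0 1 (by decide), hne 0 3 (by decide), hne 1 3 (by decide),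
      main_of_coll p hp c n hn _ _ _ (hne 0 1 (by decide)) (hc _) h⟩
  · exact ⟨σ 0, σ 1, σ 4, hne 0 1 (by decide), hne 0 4 (by decide), hne 1 4 (by decide),
      main_of_coll p hp c n hn _ _ _ (hne 0 1 (by decide)) (hc _) h⟩
  · exact ⟨σ 0, σ 2, σ 3, hne 0 2 (by decide), hne 0 3 (by decide), hne 2 3 (by decide),
      main_of_coll p hp c n hn _ _ _ (hne 0 2 (by decide)) (hc _) h⟩
  · exact ⟨σ 0, σ 2, σ 4, hne 0 2 (by decide), hne 0 4 (by decide), hne 2 4 (by decide),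
      main_of_coll p hp c n hn _ _ _ (hne 0 2 (by decide)) (hc _) h⟩
  · exact ⟨σ 0, σ 3, σ 4, hne 0 3 (by decide), hne 0 4 (by decide), hne 3 4 (by decide),
      main_of_coll p hp c n hn _ _ _ (hne 0 3 (by decide)) (hc _) h⟩
  · exact ⟨σ 1, σ 2, σ 3, hne 1 2 (by decide), hne 1 3 (by decide), hne 2 3 (by decide),
      main_of_coll p hp c n hn _ _ _ (hne 1 2 (by decide)) (hc _) h⟩
  · exact ⟨σ 1, σ 2, σ 4, hne 1 2 (by decide), hne 1 4 (by decide), hne 2 4 (by decide),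
      main_of_coll p hp c n hn _ _ _ (hne 1 2 (by decide)) (hc _) h⟩
  · exact ⟨σ 1, σ 3, σ 4, hne 1 3 (by decide), hne 1 4 (by decide), hne 3 4 (by decide),
      main_of_coll p hp c n hn _ _ _ (hne 1 3 (by decide)) (hc _) h⟩
  · exact ⟨σ 2, σ 3, σ 4, hne 2 3 (by decide), hne 2 4 (by decide), hne 3 4 (by decide),
      main_of_coll p hp c n hn _ _ _ (hne 2 3 (by decide)) (hc _) h⟩
end

section
/- Let g = {A, B, C, U} be a line of PG(2,3) through U. Then a subset b ⊆ W is a block containing {A, B, C} if and only if b = (g ∪ ℓ) \ {U} for some line ℓ of PG(2,3) with ℓ ≠ g. Consequently, the three-fold derived design (W₁₂)_{A,B,C}, whose blocks are the sets b \ {A,B,C} for blocks b containing {A,B,C}, is the affine plane of order 3 obtained from PG(2,3) by removing the line g. -/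
open Module Projectivization QuadraticMap Submodule

instance inst_s17 : Finite (Projectivization F V) := Quotient.finite _

lemma sq_one' : ∀ c : F, c ≠ 0 → c * c = 1 := by decide

lemma finrank_V : Module.finrank F V = 3 := by
  simp [Module.finrank_pi]

lemma exists_functional (S : Submodule F V) (hS : Module.finrank F S = 2) :
    ∃ φ : V →ₗ[F] F, φ ≠ 0 ∧ LinearMap.ker φ = S := by
  have hq : Module.finrank F (V ⧸ S) = 1 := by
    have h := S.finrank_quotient_add_finrank
    rw [hS, finrank_V] at h
    omega
  obtain ⟨e⟩ := FiniteDimensional.nonempty_linearEquiv_of_finrank_eq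
    (hq.trans (Module.finrank_self F).symm)
  refine ⟨e.toLinearMap ∘ₗ S.mkQ, ?_, ?_⟩
  · intro h
    have : LinearMap.ker (e.toLinearMap ∘ₗ S.mkQ) = ⊤ := by rw [h]; exact LinearMap.ker_zero
    rw [LinearMap.ker_comp, LinearEquiv.ker, Submodule.comap_bot, Submodule.ker_mkQ] at this
    have : Module.finrank F S = 3 := by rw [this]; rw [finrank_top, finrank_V]
    omega
  · rw [LinearMap.ker_comp, LinearEquiv.ker, Submodule.comap_bot, Submodule.ker_mkQ]

lemma finrank_ker (φ : V →ₗ[F] F) (hφ : φ ≠ 0) :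
    Module.finrank F (LinearMap.ker φ) = 2 := by
  obtain ⟨v, hv⟩ : ∃ v, φ v ≠ 0 := by
    by_contra h
    push_neg at h
    exact hφ (LinearMap.ext fun x => h x)
  have hrange : LinearMap.range φ = ⊤ := by
    rw [LinearMap.range_eq_top]
    intro c
    exact ⟨(c * (φ v)⁻¹) • v, by rw [LinearMap.map_smul, smul_eq_mul, mul_assoc, inv_mul_cancel₀ hv, mul_one]⟩
  have h := φ.finrank_range_add_finrank_ker
  rw [hrange, finrank_top, Module.finrank_self, finrank_V] at h
  omega

/-- The quadratic form `v ↦ φ v * ψ v`. -/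
noncomputable def prodQF (φ ψ : V →ₗ[F] F) : QuadraticForm F V :=
  LinearMap.BilinMap.toQuadraticMap ((LinearMap.mul F F).compl₂ ψ ∘ₗ φ)

lemma prodQF_apply (φ ψ : V →ₗ[F] F) (v : V) : prodQF φ ψ v = φ v * ψ v := rfl

/-- The linear form `v ↦ polar q v w - q w * φ v`. -/
noncomputable def psiMap (q : QuadraticForm F V) (φ : V →ₗ[F] F) (w : V) : V →ₗ[F] F where
  toFun v := polar q v w - q w * φ v
  map_add' x y := by
    simp only [polar_add_left, map_add]
    ring
  map_smul' c x := by
    simp only [polar_smul_left, LinearMap.map_smul, smul_eq_mul, RingHom.id_apply]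
    ring

lemma psiMap_apply (q : QuadraticForm F V) (φ : V →ₗ[F] F) (w v : V) :
    psiMap q φ w v = polar q v w - q w * φ v := rfl

lemma q_expand (q : QuadraticForm F V) (x y : F) (a u : V) :
    q (x • a + y • u) = x * x * q a + y * y * q u + x * y * polar q a u := by
  have h : polar q (x • a) (y • u) = q (x • a + y • u) - q (x • a) - q (y • u) := rfl
  have h2 : polar q (x • a) (y • u) = x * y * polar q a u := by
    rw [polar_smul_left, polar_smul_right, smul_eq_mul, smul_eq_mul]; ring
  have h3 : q (x • a) = x * x * q a := by rw [QuadraticMap.map_smul, smul_eq_mul]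
  have h4 : q (y • u) = y * y * q u := by rw [QuadraticMap.map_smul, smul_eq_mul]
  rw [h2, h3, h4] at h
  linear_combination -h

lemma factor (q : QuadraticForm F V) (φ : V →ₗ[F] F) (w : V) (hw : φ w = 1)
    (hker : ∀ v, φ v = 0 → q v = 0) (v : V) :
    q v = φ v * psiMap q φ w v := by
  set z := φ v with hz
  have hs : φ (v - z • w) = 0 := by simp [hw, hz]
  have h0 : q (v - z • w) = 0 := hker _ hs
  have e1 : polar q (v - z • w) (z • w) = q v - q (v - z • w) - q (z • w) := by
    have : (v - z • w) + z • w = v := by abel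
    simp only [QuadraticMap.polar, this]
  have e2 : polar q (v - z • w) (z • w) = z * (polar q v w - z * (2 * q w)) := by
    rw [polar_smul_right, polar_sub_left, polar_smul_left, polar_self]
    simp only [smul_eq_mul, smul_sub, two_smul, smul_add]
    ring
  have e4 : q (z • w) = z * z * q w := by rw [QuadraticMap.map_smul, smul_eq_mul]
  rw [psiMap_apply]
  have := e1.symm.trans e2
  rw [h0, e4] at this
  linear_combination this

lemma psiMap_ne_zero (q : QuadraticForm F V) (φ : V →ₗ[F] F) (w : V) (hw : φ w = 1)
    (hker : ∀ v, φ v = 0 → q v = 0) (hq : q ≠ 0) : psiMap q φ w ≠ 0 := by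
  intro h
  apply hq
  ext v
  have := factor q φ w hw hker v
  rw [h] at this
  simpa using this

lemma mk_smul_eq {v : V} {c : F} (hv : v ≠ 0) (hcv : c • v ≠ 0) :
    Projectivization.mk F (c • v) hcv = Projectivization.mk F v hv :=
  (mk_eq_mk_iff' F _ _ _ _).2 ⟨c, rfl⟩

lemma rep_mk_smul (v : V) (hv : v ≠ 0) :
    ∃ c : F, c ≠ 0 ∧ (Projectivization.mk F v hv).rep = c • v := by
  obtain ⟨a, ha⟩ := exists_smul_eq_mk_rep F v hv
  refine ⟨(a : F), a.ne_zero, ?_⟩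
  rw [← ha, Units.smul_def]

lemma mk_mem_line_iff (S : Submodule F V) (v : V) (hv : v ≠ 0) :
    (Projectivization.mk F v hv).rep ∈ S ↔ v ∈ S := by
  obtain ⟨c, hc, hrep⟩ := rep_mk_smul v hv
  rw [hrep]
  exact S.smul_mem_iff hc

lemma point_eq_of_rep_smul {X Y : Projectivization F V} {c : F} (h : Y.rep = c • X.rep) :
    X = Y := by
  have hc : c • X.rep ≠ 0 := h ▸ Y.rep_nonzero
  calc X = Projectivization.mk F X.rep X.rep_nonzero := (mk_rep X).symm
    _ = Projectivization.mk F (c • X.rep) hc := (mk_smul_eq X.rep_nonzero hc).symm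
    _ = Y := by
        conv_rhs => rw [← mk_rep Y]
        congr 1
        exact h.symm

lemma indep_of_ne {X Y : Projectivization F V} (hXY : X ≠ Y) :
    LinearIndependent F ![X.rep, Y.rep] := by
  rw [LinearIndependent.pair_iff' X.rep_nonzero]
  intro c hc
  rcases eq_or_ne c 0 with rfl | hc0
  · exact Y.rep_nonzero (by simpa using hc.symm)
  · exact hXY (point_eq_of_rep_smul hc.symm)

lemma span_pair_eq (S : Submodule F V) (hS : Module.finrank F S = 2) (a u : V)
    (ha : a ∈ S) (hu : u ∈ S) (hind : LinearIndependent F ![a, u]) :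
    ∀ s ∈ S, ∃ x y : F, x • a + y • u = s := by
  have hr : Set.range ![a, u] = {a, u} := by
    ext x
    simp [Fin.exists_fin_two, or_comm]
  have hle : Submodule.span F {a, u} ≤ S := by
    rw [Submodule.span_le]
    rintro x (rfl | rfl)
    exacts [ha, hu]
  have hfr : Module.finrank F (Submodule.span F ({a, u} : Set V)) = 2 := by
    rw [← hr]
    simpa using finrank_span_eq_card hind
  have heq : Submodule.span F ({a, u} : Set V) = S :=
    Submodule.eq_of_le_of_finrank_le hle (by rw [hfr, hS])
  intro s hs
  rw [← heq] at hs
  exact Submodule.mem_span_pair.1 hs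

/-- Let `g = {A, B, C, U}` be a line of `PG(2,3)` through `U`.  Then a subset `b` of
`W = PG(2,3) \ {U}` is a block containing `{A, B, C}` if and only if `b = (g ∪ ℓ) \ {U}`
for some line `ℓ ≠ g`.  Consequently the three-fold derived design `(W₁₂)_{A,B,C}`, whose
blocks are the sets `b \ {A, B, C}` for blocks `b ⊇ {A, B, C}`, is the affine plane of
order `3` obtained from `PG(2,3)` by removing the line `g`: its point set
`W \ {A, B, C}` is the complement of `g` and its blocks are exactly the affine lines
`ℓ \ g` for lines `ℓ ≠ g`. -/
theorem derived_design_is_affine_plane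
    (U A B C : Projectivization F V) (g : Set (Projectivization F V))
    (hg : IsLine g) (hgset : g = {A, B, C, U})
    (hAB : A ≠ B) (hAC : A ≠ C) (hBC : B ≠ C)
    (hAU : A ≠ U) (hBU : B ≠ U) (hCU : C ≠ U) :
    (∀ b : Set (Projectivization F V),
      (IsBlock U b ∧ ({A, B, C} : Set (Projectivization F V)) ⊆ b) ↔
      (∃ ℓ : Set (Projectivization F V), IsLine ℓ ∧ ℓ ≠ g ∧ b = (g ∪ ℓ) \ {U})) ∧
    (({U}ᶜ \ {A, B, C} : Set (Projectivization F V)) = gᶜ) ∧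
    ({s : Set (Projectivization F V) | ∃ b : Set (Projectivization F V),
        IsBlock U b ∧ ({A, B, C} : Set (Projectivization F V)) ⊆ b ∧ s = b \ {A, B, C}} =
      {s : Set (Projectivization F V) | ∃ ℓ : Set (Projectivization F V),
        IsLine ℓ ∧ ℓ ≠ g ∧ s = ℓ \ g}) := by
  obtain ⟨S, hS2, hgS⟩ := hg
  have hAg : A ∈ g := by rw [hgset]; simp
  have hBg : B ∈ g := by rw [hgset]; simp
  have hCg : C ∈ g := by rw [hgset]; simp
  have hUg : U ∈ g := by rw [hgset]; simp
  have haS : A.rep ∈ S := by rw [hgS] at hAg; exact hAg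
  have hbS : B.rep ∈ S := by rw [hgS] at hBg; exact hBg
  have hcS : C.rep ∈ S := by rw [hgS] at hCg; exact hCg
  have huS : U.rep ∈ S := by rw [hgS] at hUg; exact hUg
  obtain ⟨φ, hφ0, hkφ⟩ := exists_functional S hS2
  obtain ⟨w0, hw0⟩ : ∃ v, φ v ≠ 0 := by
    by_contra h
    push_neg at h
    exact hφ0 (LinearMap.ext fun x => h x)
  have hw : φ ((φ w0)⁻¹ • w0) = 1 := by
    rw [LinearMap.map_smul, smul_eq_mul, inv_mul_cancel₀ hw0]
  set w : V := (φ w0)⁻¹ • w0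
  have hspan := span_pair_eq S hS2 A.rep U.rep haS huS (indep_of_ne hAU)
  have hphiS : ∀ v : V, φ v = 0 ↔ v ∈ S := by
    intro v
    rw [← hkφ]
    exact ⟨fun h => LinearMap.mem_ker.2 h, fun h => LinearMap.mem_ker.1 h⟩
  have hgdiff : g \ {U} = ({A, B, C} : Set (Projectivization F V)) := by
    rw [hgset]
    ext X
    simp only [Set.mem_diff, Set.mem_insert_iff, Set.mem_singleton_iff]
    constructor
    · rintro ⟨(rfl | rfl | rfl | rfl), hXU⟩ <;> tauto
    · rintro (rfl | rfl | rfl)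
      exacts [⟨by tauto, hAU⟩, ⟨by tauto, hBU⟩, ⟨by tauto, hCU⟩]
  have hncard3 : ({A, B, C} : Set (Projectivization F V)).ncard = 3 := by
    rw [Set.ncard_insert_of_notMem (by simp [hAB, hAC]),
      Set.ncard_insert_of_notMem (by simp [hBC]), Set.ncard_singleton]
  have main : ∀ b : Set (Projectivization F V),
      (IsBlock U b ∧ ({A, B, C} : Set (Projectivization F V)) ⊆ b) ↔
      (∃ ℓ : Set (Projectivization F V), IsLine ℓ ∧ ℓ ≠ g ∧ b = (g ∪ ℓ) \ {U}) := by
    intro b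
    constructor
    · rintro ⟨⟨hb4, q, hq0, hbq⟩, hABCb⟩
      have hA_b : A ∈ b := hABCb (by simp)
      have hB_b : B ∈ b := hABCb (by simp)
      have hC_b : C ∈ b := hABCb (by simp)
      rw [hbq] at hA_b hB_b hC_b
      obtain ⟨-, hAq⟩ := hA_b
      obtain ⟨-, hBq⟩ := hB_b
      obtain ⟨-, hCq⟩ := hC_b
      simp only [pval] at hAq hBq hCq
      obtain ⟨x, y, hxy⟩ := hspan B.rep hbS
      obtain ⟨x', y', hxy'⟩ := hspan C.rep hcS
      have hx : x ≠ 0 := by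
        rintro rfl
        have : B.rep = y • U.rep := by rw [← hxy]; simp
        exact hBU (point_eq_of_rep_smul this).symm
      have hy : y ≠ 0 := by
        rintro rfl
        have : B.rep = x • A.rep := by rw [← hxy]; simp
        exact hAB (point_eq_of_rep_smul this)
      have hx' : x' ≠ 0 := by
        rintro rfl
        have : C.rep = y' • U.rep := by rw [← hxy']; simp
        exact hCU (point_eq_of_rep_smul this).symm
      have hy' : y' ≠ 0 := by
        rintro rfl
        have : C.rep = x' • A.rep := by rw [← hxy']; simp
        exact hAC (point_eq_of_rep_smul this)
      have hne : x * y ≠ x' * y' := by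
        intro hxyeq
        have h1 : x' * x * x = x' := by rw [mul_assoc, sq_one' x hx, mul_one]
        have h2 : x' * x * y = y' := by
          rw [mul_assoc, hxyeq, ← mul_assoc, sq_one' x' hx', one_mul]
        have : C.rep = (x' * x) • B.rep := by
          rw [← hxy, ← hxy', smul_add, smul_smul, smul_smul, h1, h2]
        exact hBC (point_eq_of_rep_smul this)
      have key : ∀ (cu p t t' : F), t ≠ 0 → t' ≠ 0 → t ≠ t' →
          2 * cu + cu + t * p = 2 * cu → 2 * cu + cu + t' * p = 2 * cu →
          cu = 0 ∧ p = 0 := by decide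
      have hB2 : 2 * q U.rep + q U.rep + (x * y) * QuadraticMap.polar q A.rep U.rep
          = 2 * q U.rep := by
        have h := hBq
        rw [← hxy, q_expand, sq_one' x hx, sq_one' y hy] at h
        linear_combination h - hAq
      have hC2 : 2 * q U.rep + q U.rep + (x' * y') * QuadraticMap.polar q A.rep U.rep
          = 2 * q U.rep := by
        have h := hCq
        rw [← hxy', q_expand, sq_one' x' hx', sq_one' y' hy'] at h
        linear_combination h - hAq
      obtain ⟨hcu, hp⟩ := key (q U.rep) (QuadraticMap.polar q A.rep U.rep) (x * y) (x' * y')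
        (mul_ne_zero hx hy) (mul_ne_zero hx' hy') hne hB2 hC2
      have hca : q A.rep = 0 := by rw [hAq, hcu, mul_zero]
      have hvanish : ∀ v : V, φ v = 0 → q v = 0 := by
        intro v hv
        obtain ⟨x0, y0, h0⟩ := hspan v ((hphiS v).1 hv)
        rw [← h0, q_expand, hca, hcu, hp]
        ring
      have hfac := factor q φ w hw hvanish
      have hψ0 := psiMap_ne_zero q φ w hw hvanish hq0
      set ψ := psiMap q φ w with hψdef
      refine ⟨{X : Projectivization F V | X.rep ∈ LinearMap.ker ψ},
        ⟨LinearMap.ker ψ, finrank_ker ψ hψ0, rfl⟩, ?_, ?_⟩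
      case refine_2 =>
        rw [hbq, hgS]
        ext X
        simp only [Set.mem_setOf_eq, Set.mem_diff, Set.mem_union, Set.mem_singleton_iff,
          pval, LinearMap.mem_ker]
        rw [hcu, mul_zero]
        constructor
        · rintro ⟨hXU, hXv⟩
          refine ⟨?_, hXU⟩
          have h := hfac X.rep
          rw [hXv] at h
          rcases mul_eq_zero.1 h.symm with h' | h'
          · exact Or.inl ((hphiS X.rep).1 h')
          · exact Or.inr h'
        · rintro ⟨hor, hXU⟩
          refine ⟨hXU, ?_⟩
          rw [hfac X.rep]
          rcases hor with h' | h'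
          · rw [(hphiS X.rep).2 h', zero_mul]
          · rw [h', mul_zero]
      case refine_1 =>
        intro hℓg
        have hb3 : b = ({A, B, C} : Set (Projectivization F V)) := by
          have hbeq : b = (g ∪ {X : Projectivization F V | X.rep ∈ LinearMap.ker ψ}) \ {U} := by
            rw [hbq, hgS]
            ext X
            simp only [Set.mem_setOf_eq, Set.mem_diff, Set.mem_union, Set.mem_singleton_iff,
              pval, LinearMap.mem_ker]
            rw [hcu, mul_zero]
            constructor
            · rintro ⟨hXU, hXv⟩
              refine ⟨?_, hXU⟩
              have h := hfac X.rep
              rw [hXv] at h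
              rcases mul_eq_zero.1 h.symm with h' | h'
              · exact Or.inl ((hphiS X.rep).1 h')
              · exact Or.inr h'
            · rintro ⟨hor, hXU⟩
              refine ⟨hXU, ?_⟩
              rw [hfac X.rep]
              rcases hor with h' | h'
              · rw [(hphiS X.rep).2 h', zero_mul]
              · rw [h', mul_zero]
          rw [hbeq, hℓg, Set.union_self, hgdiff]
        rw [hb3, hncard3] at hb4
        exact lt_irrefl 3 hb4
    · rintro ⟨ℓ, ⟨Sℓ, hSℓ2, hℓS⟩, hlg, rfl⟩
      obtain ⟨ψ, hψ0, hkψ⟩ := exists_functional Sℓ hSℓ2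
      have hpsiS : ∀ v : V, ψ v = 0 ↔ v ∈ Sℓ := by
        intro v
        rw [← hkψ]
        exact ⟨fun h => LinearMap.mem_ker.2 h, fun h => LinearMap.mem_ker.1 h⟩
      have hSne : Sℓ ≠ S := fun h => hlg (by rw [hℓS, hgS, h])
      have hnle1 : ¬Sℓ ≤ S := fun h =>
        hSne (Submodule.eq_of_le_of_finrank_le h (by rw [hSℓ2, hS2]))
      obtain ⟨v1, hv1ℓ, hv1g⟩ := SetLike.not_le_iff_exists.1 hnle1
      have hnle2 : ¬S ≤ Sℓ := fun h =>
        hSne (Submodule.eq_of_le_of_finrank_le h (by rw [hSℓ2, hS2])).symm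
      obtain ⟨v2, hv2g, hv2ℓ⟩ := SetLike.not_le_iff_exists.1 hnle2
      have hφv2 : φ v2 = 0 := (hphiS v2).2 hv2g
      have hψv1 : ψ v1 = 0 := (hpsiS v1).2 hv1ℓ
      have hφv1 : φ v1 ≠ 0 := fun h => hv1g ((hphiS v1).1 h)
      have hψv2 : ψ v2 ≠ 0 := fun h => hv2ℓ ((hpsiS v2).1 h)
      set q : QuadraticForm F V := prodQF φ ψ with hqdef
      have hq0 : q ≠ 0 := by
        intro h
        have h1 : φ (v1 + v2) ≠ 0 := by rwa [map_add, hφv2, add_zero]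
        have h2 : ψ (v1 + v2) ≠ 0 := by rwa [map_add, hψv1, zero_add]
        have h3 : q (v1 + v2) = 0 := by rw [h]; simp
        rw [hqdef, prodQF_apply] at h3
        exact mul_ne_zero h1 h2 h3
      have hqU : q U.rep = 0 := by
        rw [hqdef, prodQF_apply, (hphiS U.rep).2 huS, zero_mul]
      have hset : ({X : Projectivization F V | X ≠ U ∧ pval q X = 2 * pval q U} : Set _)
          = (g ∪ ℓ) \ {U} := by
        ext X
        simp only [Set.mem_setOf_eq, Set.mem_diff, Set.mem_union, Set.mem_singleton_iff,
          pval, hgS, hℓS, Set.mem_setOf_eq]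
        rw [hqU, mul_zero, hqdef, prodQF_apply]
        constructor
        · rintro ⟨hXU, hXv⟩
          refine ⟨?_, hXU⟩
          rcases mul_eq_zero.1 hXv with h' | h'
          · exact Or.inl ((hphiS X.rep).1 h')
          · exact Or.inr ((hpsiS X.rep).1 h')
        · rintro ⟨hor, hXU⟩
          refine ⟨hXU, ?_⟩
          rcases hor with h' | h'
          · rw [(hphiS X.rep).2 h', zero_mul]
          · rw [(hpsiS X.rep).2 h', mul_zero]
      have hv1ne : v1 ≠ 0 := fun h => hv1g (h ▸ S.zero_mem)
      set X0 : Projectivization F V := Projectivization.mk F v1 hv1ne with hX0def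
      have hX0ℓ : X0 ∈ ℓ := by
        rw [hℓS]
        exact (mk_mem_line_iff Sℓ v1 hv1ne).2 hv1ℓ
      have hX0g : X0 ∉ g := by
        rw [hgS]
        intro h
        exact hv1g ((mk_mem_line_iff S v1 hv1ne).1 h)
      have hX0U : X0 ≠ U := fun h => hX0g (h ▸ hUg)
      have hX0A : X0 ≠ A := fun h => hX0g (h ▸ hAg)
      have hX0B : X0 ≠ B := fun h => hX0g (h ▸ hBg)
      have hX0C : X0 ≠ C := fun h => hX0g (h ▸ hCg)
      have hsub : ({A, B, C, X0} : Set (Projectivization F V)) ⊆ (g ∪ ℓ) \ {U} := by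
        rintro x hx
        simp only [Set.mem_insert_iff, Set.mem_singleton_iff] at hx
        rcases hx with rfl | rfl | rfl | rfl
        · exact ⟨Or.inl hAg, by simp [hAU]⟩
        · exact ⟨Or.inl hBg, by simp [hBU]⟩
        · exact ⟨Or.inl hCg, by simp [hCU]⟩
        · exact ⟨Or.inr hX0ℓ, by simp [hX0U]⟩
      have hncard4 : ({A, B, C, X0} : Set (Projectivization F V)).ncard = 4 := by
        rw [Set.ncard_insert_of_notMem (by simp [hAB, hAC, Ne.symm hX0A]),
          Set.ncard_insert_of_notMem (by simp [hBC, Ne.symm hX0B]),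
          Set.ncard_insert_of_notMem (by simp [Ne.symm hX0C]), Set.ncard_singleton]
      have hle4 : 4 ≤ ((g ∪ ℓ) \ {U}).ncard := by
        rw [← hncard4]
        exact Set.ncard_le_ncard hsub (Set.toFinite _)
      refine ⟨⟨by omega, q, hq0, hset.symm⟩, ?_⟩
      rintro x hx
      simp only [Set.mem_insert_iff, Set.mem_singleton_iff] at hx
      rcases hx with rfl | rfl | rfl
      · exact ⟨Or.inl hAg, by simp [hAU]⟩
      · exact ⟨Or.inl hBg, by simp [hBU]⟩
      · exact ⟨Or.inl hCg, by simp [hCU]⟩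
  have hident : ∀ ℓ : Set (Projectivization F V),
      ((g ∪ ℓ) \ {U}) \ ({A, B, C} : Set (Projectivization F V)) = ℓ \ g := by
    intro ℓ
    have hgmem : ∀ X : Projectivization F V, X ∈ g ↔ (X = A ∨ X = B ∨ X = C ∨ X = U) := by
      intro X
      rw [hgset]
      simp
    ext X
    simp only [Set.mem_diff, Set.mem_union, Set.mem_singleton_iff, Set.mem_insert_iff,
      hgmem X]
    tauto
  refine ⟨main, ?_, ?_⟩
  · ext X
    rw [hgset]
    simp only [Set.mem_diff, Set.mem_compl_iff, Set.mem_singleton_iff, Set.mem_insert_iff]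
    tauto
  · ext s
    simp only [Set.mem_setOf_eq]
    constructor
    · rintro ⟨b, hbl, hsubs, rfl⟩
      obtain ⟨ℓ, hℓ, hlg, rfl⟩ := (main b).1 ⟨hbl, hsubs⟩
      exact ⟨ℓ, hℓ, hlg, hident ℓ⟩
    · rintro ⟨ℓ, hℓ, hlg, rfl⟩
      obtain ⟨hbl, hsubs⟩ := (main ((g ∪ ℓ) \ {U})).2 ⟨ℓ, hℓ, hlg, rfl⟩
      exact ⟨(g ∪ ℓ) \ {U}, hbl, hsubs, (hident ℓ).symm⟩
end
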